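/- Assume k is infinite. Then the H-prime ideals of R are exactly the 2^n ideals J_w, for subsets w ⊆ {1,…,n}. -/

import Mathlib

/-!
Common setup: `q`-commutative power series ring `R = k_q[[x_1,…,x_n]]` and
`q`-commutative Laurent series ring `L = k_q[[x_1^{±1},…,x_n^{±1}]]`, characterized
by their coefficient descriptions (twisted convolution multiplication).
-/

noncomputable section

/-- A multiplicatively antisymmetric `n × n` matrix over `k`:
`q_{ii} = 1` and `q_{ij} q_{ji} = 1`. -/
structure QMatrix (k : Type*) [Field k] (n : ℕ) where
  q : Fin n → Fin n → k
  diag : ∀ i, q i i = 1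
  antisym : ∀ i j, q i j * q j i = 1

namespace QMatrix

variable {k : Type*} [Field k] {n : ℕ} (Q : QMatrix k n)

lemma q_ne_zero (i j : Fin n) : Q.q i j ≠ 0 := fun h0 => by
  have h1 := Q.antisym i j
  rw [h0, zero_mul] at h1
  exact zero_ne_one h1

/-- The twisting weight `∏_{1 ≤ j < i ≤ n} q_{ij}^{u_i v_j}` (natural exponents), so that
`x^u · x^v = weight u v · x^{u+v}` in `R`. -/
def weight (u v : Fin n →₀ ℕ) : k :=
  ∏ i : Fin n, ∏ j : Fin n, if j < i then Q.q i j ^ (u i * v j) else 1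

/-- The twisting weight `∏_{1 ≤ j < i ≤ n} q_{ij}^{u_i v_j}` (integer exponents), so that
`x^u · x^v = zweight u v · x^{u+v}` in `L`. -/
def zweight (u v : Fin n → ℤ) : k :=
  ∏ i : Fin n, ∏ j : Fin n, if j < i then Q.q i j ^ (u i * v j) else 1

/-- The alternating bicharacter `σ(s,t) = ∏_{i,j} q_{ij}^{s_i t_j}`, so that
`x^s x^t = σ(s,t) x^t x^s` in `L`. -/
def sigma (s t : Fin n → ℤ) : k :=
  ∏ i : Fin n, ∏ j : Fin n, Q.q i j ^ (s i * t j)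

end QMatrix

/-- `R` is (a model of) the `q`-commutative power series ring `k_q[[x_1, …, x_n]]`:
its underlying `k`-vector space is that of all families of coefficients indexed by `ℕ^n`,
the constant series `1` is the multiplicative unit, and multiplication is given by the
twisted convolution: the coefficient of `x^s` in `f·g` is
`∑_{u+v=s} f_u g_v ∏_{1≤j<i≤n} q_{ij}^{u_i v_j}`. -/
structure IsQPowerSeriesRing {k : Type*} [Field k] {n : ℕ} (Q : QMatrix k n)
    (R : Type*) [Ring R] [Algebra k R] where
  coeff : R ≃ₗ[k] ((Fin n →₀ ℕ) → k)
  coeff_one : ∀ s, coeff 1 s = if s = 0 then 1 else 0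
  coeff_mul : ∀ f g : R, ∀ s, coeff (f * g) s =
    ∑ uv ∈ Finset.HasAntidiagonal.antidiagonal s, coeff f uv.1 * coeff g uv.2 * Q.weight uv.1 uv.2

namespace IsQPowerSeriesRing

variable {k : Type*} [Field k] {n : ℕ} {Q : QMatrix k n}
variable {R : Type*} [Ring R] [Algebra k R] (h : IsQPowerSeriesRing Q R)

/-- The monic monomial `x^s` of `R`. -/
def mono (s : Fin n →₀ ℕ) : R :=
  h.coeff.symm (fun t => if t = s then 1 else 0)

/-- The variable `x_i` of `R`. -/
def X (i : Fin n) : R := h.mono (Finsupp.single i 1)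

/-- The augmentation ideal `J = ⟨x_1, …, x_n⟩` of `R`, as a two-sided ideal. -/
def Jideal : TwoSidedIdeal R := TwoSidedIdeal.span (Set.range h.X)

/-- For `w ⊆ {1,…,n}`, the two-sided ideal `J_w = ⟨x_i : i ∈ w⟩` of `R`. -/
def Jw (w : Finset (Fin n)) : TwoSidedIdeal R :=
  TwoSidedIdeal.span {r : R | ∃ i ∈ w, r = h.X i}

/-- The action of `θ ∈ H = (kˣ)^n` on `R`, determined by
`x^s ↦ θ_1^{s_1} ⋯ θ_n^{s_n} x^s` and applied coefficientwise to series. -/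
def hAct (θ : Fin n → kˣ) (f : R) : R :=
  h.coeff.symm (fun s => (∏ i, (θ i : k) ^ (s i)) * h.coeff f s)

/-- A two-sided ideal of `R` is `H`-stable if it is mapped to itself by every element
of the torus `H = (kˣ)^n`. -/
def IsHStable (I : TwoSidedIdeal R) : Prop :=
  ∀ θ : Fin n → kˣ, h.hAct θ '' (I : Set R) = (I : Set R)

end IsQPowerSeriesRing

/-- A coefficient family `c : ℤ^n → k` is Laurent-bounded if `c s = 0` whenever some
coordinate of `s` is sufficiently negative, i.e. `∃ N, min(s_1,…,s_n) < -N → c s = 0`. -/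
def LaurentBounded {k : Type*} [Field k] {n : ℕ} (c : (Fin n → ℤ) → k) : Prop :=
  ∃ N : ℕ, ∀ s : Fin n → ℤ, (∃ i, s i < -(N : ℤ)) → c s = 0

/-- `L` is (a model of) the `q`-commutative Laurent series ring
`k_q[[x_1^{±1}, …, x_n^{±1}]]`: its elements correspond, `k`-linearly, to the
Laurent-bounded coefficient families indexed by `ℤ^n`, the constant series `1` is the
multiplicative unit, and multiplication is given by the twisted convolution. -/
structure IsQLaurentSeriesRing {k : Type*} [Field k] {n : ℕ} (Q : QMatrix k n)
    (L : Type*) [Ring L] [Algebra k L] where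
  coeff : L →ₗ[k] ((Fin n → ℤ) → k)
  coeff_injective : Function.Injective coeff
  coeff_bounded : ∀ f, LaurentBounded (coeff f)
  coeff_surjective : ∀ c, LaurentBounded c → ∃ f, coeff f = c
  coeff_one : ∀ s, coeff 1 s = if s = 0 then 1 else 0
  mul_support_finite : ∀ f g : L, ∀ s : Fin n → ℤ,
    (Function.support fun u => coeff f u * coeff g (s - u) * Q.zweight u (s - u)).Finite
  coeff_mul : ∀ f g : L, ∀ s : Fin n → ℤ, coeff (f * g) s =
    ∑ᶠ u : Fin n → ℤ, coeff f u * coeff g (s - u) * Q.zweight u (s - u)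

namespace IsQLaurentSeriesRing

variable {k : Type*} [Field k] {n : ℕ} {Q : QMatrix k n}
variable {L : Type*} [Ring L] [Algebra k L] (h : IsQLaurentSeriesRing Q L)

/-- The action of `θ ∈ H = (kˣ)^n` on `L`, determined by
`x^s ↦ θ_1^{s_1} ⋯ θ_n^{s_n} x^s` and applied coefficientwise to series. -/
def hAct (θ : Fin n → kˣ) (f : L) : L :=
  Classical.choose (h.coeff_surjective
    (fun s => (∏ i, ((θ i ^ (s i) : kˣ) : k)) * h.coeff f s)
    (by
      obtain ⟨N, hN⟩ := h.coeff_bounded f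
      exact ⟨N, fun s hs => by simp only []; rw [hN s hs, mul_zero]⟩))

/-- A two-sided ideal of `L` is `H`-stable if it is mapped to itself by every element
of the torus `H = (kˣ)^n`. -/
def IsHStable (I : TwoSidedIdeal L) : Prop :=
  ∀ θ : Fin n → kˣ, h.hAct θ '' (I : Set L) = (I : Set L)

end IsQLaurentSeriesRing

/-- A two-sided ideal `P` of a (possibly noncommutative) ring `A` is prime if `P ≠ A`
and whenever `I, J` are two-sided ideals with `IJ ⊆ P`, then `I ⊆ P` or `J ⊆ P`. -/
def IsPrimeTwoSided {A : Type*} [Ring A] (P : TwoSidedIdeal A) : Prop :=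
  P ≠ ⊤ ∧ ∀ I J : TwoSidedIdeal A, (∀ a ∈ I, ∀ b ∈ J, a * b ∈ P) → I ≤ P ∨ J ≤ P

/-- A two-sided ideal `I ≠ R` of `R` is `H`-prime if it is `H`-stable and whenever
`A, B` are `H`-stable two-sided ideals with `AB ⊆ I`, then `A ⊆ I` or `B ⊆ I`. -/
def IsQPowerSeriesRing.IsHPrime {k : Type*} [Field k] {n : ℕ} {Q : QMatrix k n}
    {R : Type*} [Ring R] [Algebra k R] (h : IsQPowerSeriesRing Q R)
    (I : TwoSidedIdeal R) : Prop :=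
  h.IsHStable I ∧ I ≠ ⊤ ∧
    ∀ A B : TwoSidedIdeal R, h.IsHStable A → h.IsHStable B →
      (∀ a ∈ A, ∀ b ∈ B, a * b ∈ I) → A ≤ I ∨ B ≤ I

/-!
The series in `J_w` are exactly those in which every monomial involves some `x_j` with `j ∈ w`.
Comparing lexicographically least monomials avoiding `w` shows that `J_w` is completely prime,
hence `H`-prime.

Conversely, let `I` be `H`-prime and `w = {i | x_i ∈ I}`, so `J_w ⊆ I`. Each `x_i` is a normal
element, so `x_i R` and `(I : x_i)` are `H`-stable ideals whose product lies in `I`; for `i ∉ w`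
this gives `x_i r ∈ I → r ∈ I`. Suppose `I` contains a nonzero series `g` all of whose monomials
avoid `w`, and let `x^s` be a monomial of `g` of least total degree. If `s = 0` then `g` is
right invertible, so `I = R`. Otherwise pick `i` with `s_i > 0` and, `k` being infinite,
`t ∈ kˣ` with `t^{s_i} ≠ 1`; scaling `x_i` by `t` and subtracting gives an element of `I`
divisible by `x_i`, whose cofactor lies in `I` and has the monomial `x^{s - e_i}` of smaller
degree.
-/

open Finset.HasAntidiagonal (antidiagonal mem_antidiagonal)

namespace TwoSidedIdeal

variable {A : Type*} [Ring A]

lemma smul_mem {K : Type*} [CommSemiring K] [Algebra K A] (I : TwoSidedIdeal A) (c : K)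
    {f : A} (hf : f ∈ I) : c • f ∈ I := by
  rw [Algebra.smul_def]
  exact I.mul_mem_left _ _ hf

def ofNormal (x : A) (hx : ∀ a, ∃ b, a * x = x * b) : TwoSidedIdeal A :=
  mk' {f | ∃ r, f = x * r} ⟨0, (mul_zero x).symm⟩
    (by rintro _ _ ⟨r, rfl⟩ ⟨r', rfl⟩; exact ⟨r + r', (mul_add x r r').symm⟩)
    (by rintro _ ⟨r, rfl⟩; exact ⟨-r, (mul_neg x r).symm⟩)
    (by
      rintro a _ ⟨r, rfl⟩
      obtain ⟨b, hb⟩ := hx a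
      exact ⟨b * r, by rw [← mul_assoc, hb, mul_assoc]⟩)
    (by rintro _ a ⟨r, rfl⟩; exact ⟨r * a, mul_assoc x r a⟩)

lemma mem_ofNormal {x : A} {hx : ∀ a, ∃ b, a * x = x * b} {f : A} :
    f ∈ ofNormal x hx ↔ ∃ r, f = x * r :=
  mem_mk' ..

def colon (I : TwoSidedIdeal A) (x : A) (hx : ∀ a, ∃ b, x * a = b * x) : TwoSidedIdeal A :=
  mk' {r | x * r ∈ I} (by simp [I.zero_mem])
    (fun hr hr' => by rw [Set.mem_ofPred_eq, mul_add]; exact I.add_mem hr hr')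
    (fun hr => by rw [Set.mem_ofPred_eq, mul_neg]; exact I.neg_mem hr)
    (fun {a r} hr => by
      obtain ⟨b, hb⟩ := hx a
      rw [Set.mem_ofPred_eq, ← mul_assoc, hb, mul_assoc]
      exact I.mul_mem_left b _ hr)
    (fun {r a} hr => by rw [Set.mem_ofPred_eq, ← mul_assoc]; exact I.mul_mem_right _ a hr)

lemma mem_colon {I : TwoSidedIdeal A} {x : A} {hx : ∀ a, ∃ b, x * a = b * x} {r : A} :
    r ∈ colon I x hx ↔ x * r ∈ I :=
  mem_mk' ..

lemma mul_mem_of_mem_ofNormal_of_mem_colon {I : TwoSidedIdeal A} {x : A}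
    {hl : ∀ a, ∃ b, a * x = x * b} {hr : ∀ a, ∃ b, x * a = b * x} {a b : A}
    (ha : a ∈ ofNormal x hl) (hb : b ∈ colon I x hr) : a * b ∈ I := by
  obtain ⟨r, rfl⟩ := mem_ofNormal.1 ha
  rw [mul_assoc, ← mem_colon (hx := hr)]
  exact (colon I x hr).mul_mem_left r b hb

end TwoSidedIdeal

lemma exists_pow_ne_one (k : Type*) [Field k] [Infinite k] {m : ℕ} (hm : m ≠ 0) :
    ∃ t : kˣ, (t : k) ^ m ≠ 1 := by
  classical
  obtain ⟨t, ht⟩ :=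
    Infinite.exists_notMem_finset (insert 0 (Polynomial.nthRoots m (1 : k)).toFinset)
  rw [Finset.mem_insert, Multiset.mem_toFinset, Polynomial.mem_nthRoots (Nat.pos_of_ne_zero hm),
    not_or] at ht
  exact ⟨Units.mk0 t ht.1, ht.2⟩

namespace QMatrix

variable {k : Type*} [Field k] {n : ℕ} (Q : QMatrix k n)

lemma weight_ne_zero (u v : Fin n →₀ ℕ) : Q.weight u v ≠ 0 :=
  Finset.prod_ne_zero_iff.2 fun i _ => Finset.prod_ne_zero_iff.2 fun j _ => by
    split_ifs
    · exact pow_ne_zero _ (Q.q_ne_zero i j)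
    · exact one_ne_zero

lemma weight_zero_left (v : Fin n →₀ ℕ) : Q.weight 0 v = 1 := by
  simp [weight]

/-- The coefficients of a right inverse of the series with coefficients `c`, solved degree by
degree from `∑_{u+v=s} c_u r_v weight(u,v) = δ_{s,0}`. -/
def rightInvCoeff (c : (Fin n →₀ ℕ) → k) (s : Fin n →₀ ℕ) : k :=
  (c 0)⁻¹ * ((if s = 0 then 1 else 0) -
    ∑ uv ∈ (antidiagonal s).attach,
      if hu : uv.1.1 = 0 then 0 else c uv.1.1 * rightInvCoeff c uv.1.2 * Q.weight uv.1.1 uv.1.2)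
termination_by s.degree
decreasing_by
  have hdeg := congrArg Finsupp.degree (mem_antidiagonal.1 uv.2)
  rw [map_add] at hdeg
  have := mt (Finsupp.degree_eq_zero_iff uv.1.1).1 hu
  omega

lemma sum_antidiagonal_rightInvCoeff {c : (Fin n →₀ ℕ) → k} (hc : c 0 ≠ 0) (s : Fin n →₀ ℕ) :
    ∑ uv ∈ antidiagonal s, c uv.1 * Q.rightInvCoeff c uv.2 * Q.weight uv.1 uv.2 =
      if s = 0 then 1 else 0 := by
  classical
  have hr : Q.rightInvCoeff c s = (c 0)⁻¹ * ((if s = 0 then 1 else 0) -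
      ∑ uv ∈ antidiagonal s,
        if uv.1 = 0 then 0 else c uv.1 * Q.rightInvCoeff c uv.2 * Q.weight uv.1 uv.2) := by
    rw [rightInvCoeff, ← Finset.sum_attach (antidiagonal s)]
    simp only [dite_eq_ite]
  set r := Q.rightInvCoeff c
  have hsplit : ∀ uv : (Fin n →₀ ℕ) × (Fin n →₀ ℕ),
      c uv.1 * r uv.2 * Q.weight uv.1 uv.2 = (if uv.1 = 0 then c 0 * r uv.2 else 0) +
        (if uv.1 = 0 then 0 else c uv.1 * r uv.2 * Q.weight uv.1 uv.2) := by
    rintro ⟨u, v⟩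
    split_ifs with hu
    · obtain rfl : u = 0 := hu
      rw [Q.weight_zero_left, mul_one, add_zero]
    · rw [zero_add]
  rw [Finset.sum_congr rfl fun uv _ => hsplit uv, Finset.sum_add_distrib, ← Finset.sum_filter,
    Finset.HasAntidiagonal.filter_fst_eq_antidiagonal s 0, if_pos zero_le, Finset.sum_singleton,
    tsub_zero, hr, mul_inv_cancel_left₀ hc, sub_add_cancel]

end QMatrix

namespace IsQPowerSeriesRing

variable {k : Type*} [Field k] {n : ℕ} {Q : QMatrix k n}
variable {R : Type*} [Ring R] [Algebra k R] (h : IsQPowerSeriesRing Q R)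

/-- The monomial `x^s` involves none of the variables `x_j`, `j ∈ w`. -/
def Avoids (w : Finset (Fin n)) (s : Fin n →₀ ℕ) : Prop :=
  ∀ j ∈ w, s j = 0

lemma avoids_add {w : Finset (Fin n)} {u v : Fin n →₀ ℕ} :
    Avoids w (u + v) ↔ Avoids w u ∧ Avoids w v := by
  simp only [Avoids, Finsupp.add_apply, Nat.add_eq_zero_iff, forall₂_and]

lemma Avoids.of_mem_antidiagonal {w : Finset (Fin n)} {s : Fin n →₀ ℕ}
    {uv : (Fin n →₀ ℕ) × (Fin n →₀ ℕ)} (hs : Avoids w s) (huv : uv ∈ antidiagonal s) :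
    Avoids w uv.1 ∧ Avoids w uv.2 :=
  avoids_add.1 (by rwa [mem_antidiagonal.1 huv])

lemma coeff_mono (s t : Fin n →₀ ℕ) : h.coeff (h.mono s) t = if t = s then 1 else 0 := by
  rw [mono, LinearEquiv.apply_symm_apply]

lemma coeff_mono_mul (t : Fin n →₀ ℕ) (f : R) (s : Fin n →₀ ℕ) :
    h.coeff (h.mono t * f) s = if t ≤ s then Q.weight t (s - t) * h.coeff f (s - t) else 0 := by
  classical
  rw [h.coeff_mul, ← Finset.sum_filter_of_ne (p := fun uv => uv.1 = t),
    Finset.HasAntidiagonal.filter_fst_eq_antidiagonal s t]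
  · split_ifs <;> simp [coeff_mono, mul_comm]
  · intro uv _ hne
    by_contra hne'
    simp [coeff_mono, hne'] at hne

lemma coeff_mul_mono (t : Fin n →₀ ℕ) (f : R) (s : Fin n →₀ ℕ) :
    h.coeff (f * h.mono t) s = if t ≤ s then h.coeff f (s - t) * Q.weight (s - t) t else 0 := by
  classical
  rw [h.coeff_mul, ← Finset.sum_filter_of_ne (p := fun uv => uv.2 = t),
    Finset.HasAntidiagonal.filter_snd_eq_antidiagonal s t]
  · split_ifs <;> simp [coeff_mono]
  · intro uv _ hne
    by_contra hne'
    simp [coeff_mono, hne'] at hne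

lemma coeff_X_mul (i : Fin n) (f : R) (s : Fin n →₀ ℕ) :
    h.coeff (h.X i * f) s = if Finsupp.single i 1 ≤ s then
      Q.weight (Finsupp.single i 1) (s - Finsupp.single i 1) *
        h.coeff f (s - Finsupp.single i 1) else 0 :=
  h.coeff_mono_mul _ f s

lemma coeff_mul_X (i : Fin n) (f : R) (s : Fin n →₀ ℕ) :
    h.coeff (f * h.X i) s = if Finsupp.single i 1 ≤ s then
      h.coeff f (s - Finsupp.single i 1) *
        Q.weight (s - Finsupp.single i 1) (Finsupp.single i 1) else 0 :=
  h.coeff_mul_mono _ f s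

lemma coeff_X_mul_add_single (i : Fin n) (f : R) (t : Fin n →₀ ℕ) :
    h.coeff (h.X i * f) (t + Finsupp.single i 1) =
      Q.weight (Finsupp.single i 1) t * h.coeff f t := by
  rw [coeff_X_mul, if_pos le_add_self, add_tsub_cancel_right]

lemma exists_mul_X_eq (i : Fin n) (a : R) : ∃ b, a * h.X i = h.X i * b := by
  refine ⟨h.coeff.symm fun u => (Q.weight (Finsupp.single i 1) u)⁻¹ *
    Q.weight u (Finsupp.single i 1) * h.coeff a u, h.coeff.injective (funext fun s => ?_)⟩
  rw [coeff_mul_X, coeff_X_mul]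
  split_ifs
  · rw [LinearEquiv.apply_symm_apply]
    field_simp [Q.weight_ne_zero]
  · rfl

lemma exists_X_mul_eq (i : Fin n) (a : R) : ∃ b, h.X i * a = b * h.X i := by
  refine ⟨h.coeff.symm fun u => (Q.weight u (Finsupp.single i 1))⁻¹ *
    Q.weight (Finsupp.single i 1) u * h.coeff a u, h.coeff.injective (funext fun s => ?_)⟩
  rw [coeff_mul_X, coeff_X_mul]
  split_ifs
  · rw [LinearEquiv.apply_symm_apply]
    field_simp [Q.weight_ne_zero]
  · rfl

lemma exists_eq_X_mul (i : Fin n) (g : R) (hg : ∀ s, h.coeff g s ≠ 0 → s i ≠ 0) :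
    ∃ r, g = h.X i * r := by
  refine ⟨h.coeff.symm fun t => (Q.weight (Finsupp.single i 1) t)⁻¹ *
    h.coeff g (t + Finsupp.single i 1), h.coeff.injective (funext fun s => ?_)⟩
  rw [coeff_X_mul]
  split_ifs with hs
  · rw [LinearEquiv.apply_symm_apply, tsub_add_cancel_of_le hs,
      mul_inv_cancel_left₀ (Q.weight_ne_zero _ _)]
  · by_contra h0
    exact hs (Finsupp.single_le_iff.2 (Nat.one_le_iff_ne_zero.2 (hg s h0)))

lemma exists_mul_eq_one_of_coeff_zero_ne_zero (f : R) (hf : h.coeff f 0 ≠ 0) :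
    ∃ g, f * g = 1 :=
  ⟨h.coeff.symm (Q.rightInvCoeff (h.coeff f)), h.coeff.injective (funext fun s => by
    simp only [h.coeff_mul, h.coeff_one, LinearEquiv.apply_symm_apply]
    exact Q.sum_antidiagonal_rightInvCoeff hf s)⟩

open Classical in
def restrict (p : (Fin n →₀ ℕ) → Prop) (f : R) : R :=
  h.coeff.symm fun s => if p s then h.coeff f s else 0

open Classical in
lemma coeff_restrict (p : (Fin n →₀ ℕ) → Prop) (f : R) (s : Fin n →₀ ℕ) :
    h.coeff (h.restrict p f) s = if p s then h.coeff f s else 0 := by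
  rw [restrict, LinearEquiv.apply_symm_apply]

lemma coeff_hAct (θ : Fin n → kˣ) (f : R) (s : Fin n →₀ ℕ) :
    h.coeff (h.hAct θ f) s = (∏ i, (θ i : k) ^ s i) * h.coeff f s := by
  rw [hAct, LinearEquiv.apply_symm_apply]

lemma hAct_hAct (θ θ' : Fin n → kˣ) (f : R) : h.hAct θ (h.hAct θ' f) = h.hAct (θ * θ') f :=
  h.coeff.injective (funext fun s => by
    simp only [coeff_hAct, Pi.mul_apply, Units.val_mul, mul_pow, Finset.prod_mul_distrib,
      mul_assoc])

lemma hAct_one (f : R) : h.hAct 1 f = f :=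
  h.coeff.injective (funext fun s => by simp [coeff_hAct])

lemma hAct_mul (θ : Fin n → kˣ) (f g : R) : h.hAct θ (f * g) = h.hAct θ f * h.hAct θ g := by
  refine h.coeff.injective (funext fun s => ?_)
  simp only [coeff_hAct, h.coeff_mul, Finset.mul_sum]
  refine Finset.sum_congr rfl fun uv huv => ?_
  rw [← mem_antidiagonal.1 huv]
  simp only [Finsupp.add_apply, pow_add, Finset.prod_mul_distrib]
  ring

lemma hAct_X (θ : Fin n → kˣ) (i : Fin n) : h.hAct θ (h.X i) = (θ i : k) • h.X i := by
  refine h.coeff.injective (funext fun s => ?_)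
  rw [coeff_hAct, map_smul, Pi.smul_apply, smul_eq_mul, X, coeff_mono]
  split_ifs with hs
  · simp [hs, Finsupp.single_apply, pow_ite]
  · simp

lemma isHStable_iff {I : TwoSidedIdeal R} :
    h.IsHStable I ↔ ∀ θ, ∀ f ∈ I, h.hAct θ f ∈ I := by
  refine ⟨fun hI θ f hf => ?_, fun hI θ => Set.Subset.antisymm ?_ fun f hf => ?_⟩
  · rw [← SetLike.mem_coe, ← hI θ]
    exact Set.mem_image_of_mem _ hf
  · rintro _ ⟨f, hf, rfl⟩
    exact hI θ f hf
  · exact ⟨h.hAct θ⁻¹ f, hI _ f hf, by rw [hAct_hAct, mul_inv_cancel, hAct_one]⟩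

lemma isHStable_ofNormal_X (i : Fin n) :
    h.IsHStable (TwoSidedIdeal.ofNormal (h.X i) (h.exists_mul_X_eq i)) := by
  refine h.isHStable_iff.2 fun θ f hf => ?_
  obtain ⟨r, rfl⟩ := TwoSidedIdeal.mem_ofNormal.1 hf
  exact TwoSidedIdeal.mem_ofNormal.2
    ⟨(θ i : k) • h.hAct θ r, by rw [hAct_mul, hAct_X, smul_mul_assoc, mul_smul_comm]⟩

lemma isHStable_colon_X {I : TwoSidedIdeal R} (hI : h.IsHStable I) (i : Fin n) :
    h.IsHStable (I.colon (h.X i) (h.exists_X_mul_eq i)) := by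
  refine h.isHStable_iff.2 fun θ f hf => TwoSidedIdeal.mem_colon.2 ?_
  have hθ := I.smul_mem (θ i : k)⁻¹ (h.isHStable_iff.1 hI θ _ (TwoSidedIdeal.mem_colon.1 hf))
  rwa [hAct_mul, hAct_X, smul_mul_assoc, inv_smul_smul₀ (θ i).ne_zero] at hθ

def coeffIdeal (w : Finset (Fin n)) : TwoSidedIdeal R :=
  TwoSidedIdeal.mk' {f | ∀ s, Avoids w s → h.coeff f s = 0}
    (fun s _ => by simp)
    (fun hf hg s hs => by simp [hf s hs, hg s hs])
    (fun hf s hs => by simp [hf s hs])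
    (fun {f g} hg s hs => by
      rw [h.coeff_mul]
      refine Finset.sum_eq_zero fun uv huv => ?_
      rw [hg uv.2 (hs.of_mem_antidiagonal huv).2, mul_zero, zero_mul])
    (fun {f g} hf s hs => by
      rw [h.coeff_mul]
      refine Finset.sum_eq_zero fun uv huv => ?_
      rw [hf uv.1 (hs.of_mem_antidiagonal huv).1, zero_mul, zero_mul])

lemma mem_coeffIdeal {w : Finset (Fin n)} {f : R} :
    f ∈ h.coeffIdeal w ↔ ∀ s, Avoids w s → h.coeff f s = 0 :=
  TwoSidedIdeal.mem_mk' ..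

lemma X_mem_Jw {w : Finset (Fin n)} {i : Fin n} (hi : i ∈ w) : h.X i ∈ h.Jw w :=
  TwoSidedIdeal.subset_span ⟨i, hi, rfl⟩

lemma Jw_mono {w w' : Finset (Fin n)} (hw : w ⊆ w') : h.Jw w ≤ h.Jw w' :=
  TwoSidedIdeal.span_mono fun _ ⟨i, hi, hr⟩ => ⟨i, hw hi, hr⟩

lemma Jw_le_coeffIdeal (w : Finset (Fin n)) : h.Jw w ≤ h.coeffIdeal w := by
  refine TwoSidedIdeal.span_le.2 ?_
  rintro _ ⟨i, hi, rfl⟩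
  refine h.mem_coeffIdeal.2 fun s hs => ?_
  rw [X, coeff_mono, if_neg]
  rintro rfl
  simpa using hs i hi

lemma coeffIdeal_le_Jw (w : Finset (Fin n)) : h.coeffIdeal w ≤ h.Jw w := by
  classical
  induction w using Finset.induction_on with
  | empty =>
    intro f hf
    have hf0 : f = 0 := h.coeff.injective <| funext fun s => by
      simpa using h.mem_coeffIdeal.1 hf s fun j hj => absurd hj (Finset.notMem_empty j)
    rw [hf0]
    exact TwoSidedIdeal.zero_mem _
  | insert a w _ ih =>
    intro f hf
    -- `g` collects the monomials of `f` divisible by `x_a`; the rest lies in `coeffIdeal w`.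
    set g := h.restrict (fun s => s a ≠ 0) f
    obtain ⟨r, hr⟩ := h.exists_eq_X_mul a g fun s hs => by
      by_contra hsa
      simp [g, coeff_restrict, hsa] at hs
    have hfg : f - g ∈ h.coeffIdeal w := h.mem_coeffIdeal.2 fun s hs => by
      rw [map_sub, Pi.sub_apply, coeff_restrict]
      split_ifs with hsa
      · exact sub_self _
      · refine (sub_zero _).trans (h.mem_coeffIdeal.1 hf s fun j hj => ?_)
        rcases Finset.mem_insert.1 hj with rfl | hj
        exacts [not_not.1 hsa, hs j hj]
    rw [← sub_add_cancel f g]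
    nth_rw 2 [hr]
    exact TwoSidedIdeal.add_mem _ (h.Jw_mono (Finset.subset_insert a w) (ih hfg))
      (TwoSidedIdeal.mul_mem_right _ _ _ (h.X_mem_Jw (Finset.mem_insert_self a w)))

lemma mem_Jw {w : Finset (Fin n)} {f : R} :
    f ∈ h.Jw w ↔ ∀ s, Avoids w s → h.coeff f s = 0 := by
  rw [le_antisymm (h.Jw_le_coeffIdeal w) (h.coeffIdeal_le_Jw w), mem_coeffIdeal]

lemma X_mem_Jw_iff {w : Finset (Fin n)} {i : Fin n} : h.X i ∈ h.Jw w ↔ i ∈ w := by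
  refine ⟨fun hX => ?_, h.X_mem_Jw⟩
  by_contra hi
  have h0 := h.mem_Jw.1 hX (Finsupp.single i 1) fun j hj =>
    Finsupp.single_eq_of_ne (fun hij => hi (hij ▸ hj))
  simp [X, coeff_mono] at h0

lemma Jw_injective : Function.Injective h.Jw := fun w w' hw =>
  Finset.ext fun i => by rw [← h.X_mem_Jw_iff, hw, h.X_mem_Jw_iff]

lemma isHStable_Jw (w : Finset (Fin n)) : h.IsHStable (h.Jw w) :=
  h.isHStable_iff.2 fun θ f hf => h.mem_Jw.2 fun s hs => by
    rw [coeff_hAct, h.mem_Jw.1 hf s hs, mul_zero]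

lemma one_notMem_Jw (w : Finset (Fin n)) : (1 : R) ∉ h.Jw w := fun h1 => by
  simpa [h.coeff_one] using h.mem_Jw.1 h1 0 fun _ _ => rfl

/-- The witness is the product of the lexicographically least monomials of `a` and `b` that
avoid `w`. -/
lemma exists_coeff_mul_ne_zero {w : Finset (Fin n)} {a b : R}
    (ha : ∃ u, Avoids w u ∧ h.coeff a u ≠ 0) (hb : ∃ v, Avoids w v ∧ h.coeff b v ≠ 0) :
    ∃ s, Avoids w s ∧ h.coeff (a * b) s ≠ 0 := by
  let S (f : R) : Set (Lex (Fin n →₀ ℕ)) := {x | Avoids w (ofLex x) ∧ h.coeff f (ofLex x) ≠ 0}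
  obtain ⟨u₀, hu₀, hu₀_min⟩ := wellFounded_lt.has_min (S a) (ha.imp fun u hu => hu)
  obtain ⟨v₀, hv₀, hv₀_min⟩ := wellFounded_lt.has_min (S b) (hb.imp fun v hv => hv)
  have hs : Avoids w (ofLex u₀ + ofLex v₀) := avoids_add.2 ⟨hu₀.1, hv₀.1⟩
  refine ⟨ofLex u₀ + ofLex v₀, hs, ?_⟩
  rw [h.coeff_mul, Finset.sum_eq_single_of_mem (ofLex u₀, ofLex v₀) (mem_antidiagonal.2 rfl)]
  · exact mul_ne_zero (mul_ne_zero hu₀.2 hv₀.2) (Q.weight_ne_zero _ _)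
  rintro ⟨u, v⟩ huv hne
  by_contra hterm
  obtain ⟨hu, hv⟩ := hs.of_mem_antidiagonal huv
  have hle_u : u₀ ≤ toLex u :=
    not_lt.1 (hu₀_min (toLex u) ⟨hu, left_ne_zero_of_mul (left_ne_zero_of_mul hterm)⟩)
  have hle_v : v₀ ≤ toLex v :=
    not_lt.1 (hv₀_min (toLex v) ⟨hv, right_ne_zero_of_mul (left_ne_zero_of_mul hterm)⟩)
  have hsum : u₀ + v₀ = toLex u + toLex v := congrArg toLex (mem_antidiagonal.1 huv).symm
  obtain ⟨rfl, rfl⟩ := (add_eq_add_iff_eq_and_eq hle_u hle_v).1 hsum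
  exact hne rfl

lemma mul_notMem_Jw {w : Finset (Fin n)} {a b : R} (ha : a ∉ h.Jw w) (hb : b ∉ h.Jw w) :
    a * b ∉ h.Jw w := by
  simp only [mem_Jw, not_forall, exists_prop] at ha hb ⊢
  exact h.exists_coeff_mul_ne_zero ha hb

lemma isHPrime_Jw (w : Finset (Fin n)) : h.IsHPrime (h.Jw w) := by
  refine ⟨h.isHStable_Jw w, fun htop => h.one_notMem_Jw w (htop ▸ TwoSidedIdeal.mem_top R),
    fun A B _ _ hAB => ?_⟩
  by_contra! hAB'
  obtain ⟨a, haA, ha⟩ := SetLike.not_le_iff_exists.1 hAB'.1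
  obtain ⟨b, hbB, hb⟩ := SetLike.not_le_iff_exists.1 hAB'.2
  exact h.mul_notMem_Jw ha hb (hAB a haA b hbB)

lemma mem_of_X_mul_mem {I : TwoSidedIdeal R} (hP : h.IsHPrime I) {i : Fin n} (hX : h.X i ∉ I)
    {r : R} (hr : h.X i * r ∈ I) : r ∈ I := by
  obtain ⟨hI, -, hprime⟩ := hP
  rcases hprime _ _ (h.isHStable_ofNormal_X i) (h.isHStable_colon_X hI i)
    (fun a ha b hb => TwoSidedIdeal.mul_mem_of_mem_ofNormal_of_mem_colon ha hb) with hle | hle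
  · exact absurd (hle (TwoSidedIdeal.mem_ofNormal.2 ⟨1, (mul_one _).symm⟩)) hX
  · exact hle (TwoSidedIdeal.mem_colon.2 hr)

/-- The torus step of the descent: if `θ` scales `x_i` by `t` with `t ^ s_i ≠ 1`, then
`g - θ • g` loses every monomial of `g` free of `x_i` but keeps `x^s`, so it is `x_i r` with
`r` as stated. -/
lemma exists_X_mul_mem [Infinite k] {I : TwoSidedIdeal R} (hI : h.IsHStable I) {g : R}
    (hg : g ∈ I) {s : Fin n →₀ ℕ} (hgs : h.coeff g s ≠ 0) {i : Fin n} (hi : s i ≠ 0) :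
    ∃ r, h.X i * r ∈ I ∧ h.coeff r (s - Finsupp.single i 1) ≠ 0 ∧
      ∀ τ, h.coeff r τ ≠ 0 → h.coeff g (τ + Finsupp.single i 1) ≠ 0 := by
  classical
  obtain ⟨t, ht⟩ := exists_pow_ne_one k hi
  set g' := g - h.hAct (Pi.mulSingle i t) g
  have hg' : ∀ s, h.coeff g' s = (1 - (t : k) ^ s i) * h.coeff g s := fun s => by
    simp [g', coeff_hAct, Pi.mulSingle_apply, apply_ite, sub_mul]
  obtain ⟨r, hr⟩ := h.exists_eq_X_mul i g' fun s hs hsi => hs (by simp [hg', hsi])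
  have hcoeff (τ) : h.coeff g' (τ + Finsupp.single i 1) =
      Q.weight (Finsupp.single i 1) τ * h.coeff r τ := by
    rw [hr, coeff_X_mul_add_single]
  refine ⟨r, hr ▸ I.sub_mem hg (h.isHStable_iff.1 hI _ g hg), fun h0 => ?_, fun τ hτ h0 => ?_⟩
  · have := hcoeff (s - Finsupp.single i 1)
    rw [tsub_add_cancel_of_le (Finsupp.single_le_iff.2 (Nat.one_le_iff_ne_zero.2 hi)), h0,
      mul_zero, hg'] at this
    exact mul_ne_zero (sub_ne_zero.2 ht.symm) hgs this
  · have := hcoeff τ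
    rw [hg', h0, mul_zero] at this
    exact mul_ne_zero (Q.weight_ne_zero _ _) hτ this.symm

lemma eq_zero_of_mem_of_avoids [Infinite k] {I : TwoSidedIdeal R} (hP : h.IsHPrime I)
    {w : Finset (Fin n)} (hw : ∀ i ∉ w, h.X i ∉ I) {g : R} (hg : g ∈ I)
    (hgw : ∀ s, h.coeff g s ≠ 0 → Avoids w s) : g = 0 := by
  suffices ∀ d (g : R), g ∈ I → (∀ s, h.coeff g s ≠ 0 → Avoids w s) →
      ∀ s, s.degree = d → h.coeff g s = 0 from
    h.coeff.injective (funext fun s => by simpa using this _ g hg hgw s rfl)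
  intro d
  induction d with
  | zero =>
    intro g hg _ s hs
    rw [Finsupp.degree_eq_zero_iff] at hs
    subst hs
    by_contra h0
    obtain ⟨g', hg'⟩ := h.exists_mul_eq_one_of_coeff_zero_ne_zero g h0
    exact hP.2.1 (I.eq_top (hg' ▸ I.mul_mem_right g g' hg))
  | succ d ih =>
    intro g hg hgw s hs
    by_contra hgs
    obtain ⟨i, hi⟩ : ∃ i, s i ≠ 0 := by
      by_contra! h0
      rw [show s = 0 from Finsupp.ext h0, map_zero] at hs
      omega
    obtain ⟨r, hrI, hr, hrg⟩ := h.exists_X_mul_mem hP.1 hg hgs hi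
    refine hr (ih r (h.mem_of_X_mul_mem hP (hw i fun hiw => hi (hgw s hgs i hiw)) hrI)
      (fun τ hτ => (avoids_add.1 (hgw _ (hrg τ hτ))).1) _ ?_)
    have hdeg := congrArg Finsupp.degree
      (tsub_add_cancel_of_le (Finsupp.single_le_iff.2 (Nat.one_le_iff_ne_zero.2 hi)))
    rw [map_add, Finsupp.degree_single, hs] at hdeg
    omega

lemma exists_eq_Jw_of_isHPrime [Infinite k] {I : TwoSidedIdeal R} (hP : h.IsHPrime I) :
    ∃ w, I = h.Jw w := by
  classical
  set w := Finset.univ.filter fun i => h.X i ∈ I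
  have hJ : h.Jw w ≤ I := TwoSidedIdeal.span_le.2 <| by
    rintro _ ⟨i, hi, rfl⟩
    exact (Finset.mem_filter.1 hi).2
  refine ⟨w, le_antisymm (fun f hf => h.mem_Jw.2 fun s hs => ?_) hJ⟩
  have hfg : f - h.restrict (Avoids w) f ∈ h.Jw w :=
    h.mem_Jw.2 fun s hs => by simp [coeff_restrict, hs]
  have hg : h.restrict (Avoids w) f ∈ I := by
    simpa using I.sub_mem hf (hJ hfg)
  have hg0 := h.eq_zero_of_mem_of_avoids hP (w := w) (fun i hi hX => hi (by simpa [w] using hX)) hg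
    fun s hs => by
      by_contra hsw
      simp [coeff_restrict, hsw] at hs
  simpa [coeff_restrict, hs] using congrArg (h.coeff · s) hg0

end IsQPowerSeriesRing

theorem stmt_14_general {k : Type*} [Field k] [Infinite k] {n : ℕ} (Q : QMatrix k n)
    (R : Type*) [Ring R] [Algebra k R] (h : IsQPowerSeriesRing Q R) :
    {I : TwoSidedIdeal R | h.IsHPrime I} =
      {I : TwoSidedIdeal R | ∃ w : Finset (Fin n), I = h.Jw w} ∧
    Function.Injective h.Jw := by
  refine ⟨Set.ext fun I => ⟨h.exists_eq_Jw_of_isHPrime, ?_⟩, h.Jw_injective⟩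
  rintro ⟨w, rfl⟩
  exact h.isHPrime_Jw w

/-- Assume `k` is infinite. Then the `H`-prime ideals of `R` are
exactly the `2^n` ideals `J_w`, for subsets `w ⊆ {1,…,n}`. -/
theorem stmt_14 {k : Type*} [Field k] [Infinite k] {n : ℕ} (hn : 0 < n) (Q : QMatrix k n)
    (R : Type*) [Ring R] [Algebra k R] (h : IsQPowerSeriesRing Q R) :
    {I : TwoSidedIdeal R | h.IsHPrime I} =
      {I : TwoSidedIdeal R | ∃ w : Finset (Fin n), I = h.Jw w} ∧
    Function.Injective h.Jw :=
  stmt_14_general Q R h
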